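/- arXiv:2112.12347 — 3 statements merged into one kernel-verified Lean document; each statement's English description precedes it below -/
import Mathlib

section
/- Let X₁, X₂, X₃ be i.i.d. random vectors in ℝᵖ with absolutely continuous marginals, let A₁₂ = sign(X₁ − X₂) (entrywise sign) and A₁ = E[A₁₂ | X₁]. Then Var(A₁₂ᵀA₁₃) ≥ Var(A₁₂ᵀA₁) ≥ Var(A₁ᵀA₁). -/
open MeasureTheory ProbabilityTheory
open scoped ENNReal

/-!
Both inequalities are instances of `Var[E[F | 𝓖]] ≤ Var[F]` (law of total variance).
Conditioning `A₁₂ᵀA₁₃` on `(X₁, X₂)` pulls out the factors `sign (X₁ⱼ - X₂ⱼ)` and, since `X₃` is an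
independent copy of `X₂`, turns each `sign (X₁ⱼ - X₃ⱼ)` into `A₁ⱼ`; this gives `A₁₂ᵀA₁`.
Conditioning `A₁₂ᵀA₁` on `X₁` likewise pulls out the `A₁ⱼ` and gives `A₁ᵀA₁`.
-/

@[fun_prop]
lemma Real.measurable_sign : Measurable Real.sign :=
  .ite measurableSet_Iio measurable_const (.ite measurableSet_Ioi measurable_const measurable_const)

lemma Real.abs_sign_le_one (r : ℝ) : |Real.sign r| ≤ 1 := by
  rcases Real.sign_apply_eq r with h | h | h <;> simp [h]

lemma memLp_top_sign_comp {Ω : Type*} {mΩ : MeasurableSpace Ω} {μ : Measure Ω} {f : Ω → ℝ}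
    (hf : AEMeasurable f μ) : MemLp (fun ω => Real.sign (f ω)) ∞ μ :=
  memLp_top_of_bound (Real.measurable_sign.comp_aemeasurable hf).aestronglyMeasurable 1
    (ae_of_all _ fun _ => Real.abs_sign_le_one _)

section Conditioning

variable {Ω α β E : Type*} {mΩ : MeasurableSpace Ω} {mα : MeasurableSpace α}
  {mβ : MeasurableSpace β} [NormedAddCommGroup E] [NormedSpace ℝ E] [CompleteSpace E]
  {P : Measure Ω} [IsFiniteMeasure P] {f : α × β → E}

theorem condExp_comap_ae_eq_integral_of_indepFun {Y : Ω → α} {Z : Ω → β}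
    (hY : Measurable Y) (hZ : Measurable Z) (hYZ : IndepFun Y Z P)
    (hf : StronglyMeasurable f) (hf_int : Integrable (fun ω => f (Y ω, Z ω)) P) :
    P[fun ω => f (Y ω, Z ω) | mα.comap Y] =ᵐ[P] fun ω => ∫ z, f (Y ω, z) ∂(P.map Z) := by
  have hlaw : P.map (fun ω => (Y ω, Z ω)) = (P.map Y).prod (P.map Z) :=
    (indepFun_iff_map_prod_eq_prod_map_map hY.aemeasurable hZ.aemeasurable).1 hYZ
  have hYZm : AEMeasurable (fun ω => (Y ω, Z ω)) P := (hY.prodMk hZ).aemeasurable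
  have hf_int' : Integrable f ((P.map Y).prod (P.map Z)) :=
    hlaw ▸ (integrable_map_measure hf.aestronglyMeasurable hYZm).2 hf_int
  have hφ : StronglyMeasurable fun x => ∫ z, f (x, z) ∂(P.map Z) := hf.integral_prod_right'
  have hφ_int : Integrable (fun ω => ∫ z, f (Y ω, z) ∂(P.map Z)) P :=
    (integrable_map_measure hφ.aestronglyMeasurable hY.aemeasurable).1 hf_int'.integral_prod_left
  refine (ae_eq_condExp_of_forall_setIntegral_eq hY.comap_le hf_int
    (fun _ _ _ => hφ_int.integrableOn) ?_
    (hφ.comp_measurable (comap_measurable Y)).aestronglyMeasurable).symm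
  rintro _ ⟨t, ht, rfl⟩ -
  have hpre : Y ⁻¹' t = (fun ω => (Y ω, Z ω)) ⁻¹' (t ×ˢ Set.univ) := by ext; simp
  rw [← setIntegral_map ht hφ.aestronglyMeasurable hY.aemeasurable, hpre,
    ← setIntegral_map (ht.prod .univ) hf.aestronglyMeasurable hYZm, hlaw,
    setIntegral_prod _ hf_int'.integrableOn]
  simp only [Measure.restrict_univ]

theorem condExp_comap_prodMk_ae_eq_condExp_comap {X : Ω → α} {Y Z : Ω → β}
    (hX : Measurable X) (hY : Measurable Y) (hZ : Measurable Z) (hXY : IndepFun X Y P)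
    (hXYZ : IndepFun (fun ω => (X ω, Y ω)) Z P) (hYZ : P.map Z = P.map Y)
    (hf : StronglyMeasurable f) (hf_int : Integrable (fun ω => f (X ω, Y ω)) P) :
    P[fun ω => f (X ω, Z ω) | (mα.prod mβ).comap fun ω => (X ω, Y ω)] =ᵐ[P]
      P[fun ω => f (X ω, Y ω) | mα.comap X] := by
  have hXZ : IndepFun X Z P := hXYZ.comp measurable_fst measurable_id
  have hlaw : P.map (fun ω => (X ω, Z ω)) = P.map (fun ω => (X ω, Y ω)) := by
    rw [(indepFun_iff_map_prod_eq_prod_map_map hX.aemeasurable hZ.aemeasurable).1 hXZ,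
      (indepFun_iff_map_prod_eq_prod_map_map hX.aemeasurable hY.aemeasurable).1 hXY, hYZ]
  have hf_int' : Integrable (fun ω => f (X ω, Z ω)) P := by
    have := (integrable_map_measure hf.aestronglyMeasurable (hX.prodMk hY).aemeasurable).2 hf_int
    rw [← hlaw] at this
    exact (integrable_map_measure hf.aestronglyMeasurable (hX.prodMk hZ).aemeasurable).1 this
  calc P[fun ω => f (X ω, Z ω) | (mα.prod mβ).comap fun ω => (X ω, Y ω)]
      =ᵐ[P] fun ω => ∫ z, f (X ω, z) ∂(P.map Z) :=
        condExp_comap_ae_eq_integral_of_indepFun (f := fun q => f (q.1.1, q.2)) (hX.prodMk hY)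
          hZ hXYZ (hf.comp_measurable (measurable_fst.fst.prodMk measurable_snd)) hf_int'
    _ = fun ω => ∫ z, f (X ω, z) ∂(P.map Y) := by rw [hYZ]
    _ =ᵐ[P] P[fun ω => f (X ω, Y ω) | mα.comap X] :=
        (condExp_comap_ae_eq_integral_of_indepFun hX hY hXY hf hf_int).symm

end Conditioning

section Variance

variable {Ω ι : Type*} {m m₀ : MeasurableSpace Ω} {μ : Measure Ω}

theorem variance_condExp_le [IsProbabilityMeasure μ] (hm : m ≤ m₀) {X : Ω → ℝ}
    (hX : MemLp X 2 μ) : Var[μ[X | m]; μ] ≤ Var[X; μ] := by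
  rw [← integral_condVar_add_variance_condExp hm hX]
  have : 0 ≤ μ[Var[X; μ | m]] :=
    integral_nonneg_of_ae (condExp_nonneg (ae_of_all _ fun _ => sq_nonneg _))
  linarith

theorem condExp_sum_mul_ae_eq (s : Finset ι) {g f h : ι → Ω → ℝ}
    (hg : ∀ i, AEStronglyMeasurable[m] (g i) μ) (hgf : ∀ i, Integrable (g i * f i) μ)
    (hf : ∀ i, Integrable (f i) μ) (hfh : ∀ i, μ[f i | m] =ᵐ[μ] h i) :
    μ[fun ω => ∑ i ∈ s, g i ω * f i ω | m] =ᵐ[μ] fun ω => ∑ i ∈ s, g i ω * h i ω := by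
  have hsum : (fun ω => ∑ i ∈ s, g i ω * f i ω) = ∑ i ∈ s, g i * f i := by
    ext; simp [Finset.sum_apply]
  have hterm : ∀ᵐ ω ∂μ, ∀ i ∈ s, μ[g i * f i | m] ω = g i ω * h i ω :=
    (Filter.eventually_all_finset s).2 fun i _ => by
      filter_upwards [condExp_mul_of_aestronglyMeasurable_left (hg i) (hgf i) (hf i), hfh i]
        with ω h₁ h₂
      rw [h₁, Pi.mul_apply, h₂]
  rw [hsum]
  filter_upwards [condExp_finsetSum (fun i _ => hgf i) m, hterm] with ω h₁ h₂
  rw [h₁, Finset.sum_apply]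
  exact Finset.sum_congr rfl h₂

theorem variance_sum_mul_le_of_condExp [IsProbabilityMeasure μ] (hm : m ≤ m₀) (s : Finset ι)
    {g f h : ι → Ω → ℝ} (hg : ∀ i, AEStronglyMeasurable[m] (g i) μ)
    (hgf : ∀ i, MemLp (g i * f i) 2 μ) (hf : ∀ i, Integrable (f i) μ)
    (hfh : ∀ i, μ[f i | m] =ᵐ[μ] h i) :
    Var[fun ω => ∑ i ∈ s, g i ω * h i ω; μ] ≤ Var[fun ω => ∑ i ∈ s, g i ω * f i ω; μ] := by
  rw [← variance_congr
    (condExp_sum_mul_ae_eq s hg (fun i => (hgf i).integrable one_le_two) hf hfh)]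
  exact variance_condExp_le hm (memLp_finsetSum s fun i _ => hgf i)

end Variance

theorem hoeffding_variance_inequalities_general (p : ℕ)
    {Ω : Type*} [MeasurableSpace Ω] (P : Measure Ω) [IsProbabilityMeasure P]
    (X₁ X₂ X₃ : Ω → (Fin p → ℝ))
    (hX₁ : Measurable X₁) (hX₂ : Measurable X₂) (hX₃ : Measurable X₃)
    (hindep : iIndepFun ![X₁, X₂, X₃] P)
    (hid₂ : P.map X₂ = P.map X₁) (hid₃ : P.map X₃ = P.map X₁)
    (A₁ : Fin p → Ω → ℝ)
    (hA₁ : ∀ j, A₁ j =ᵐ[P] P[(fun ω => Real.sign (X₁ ω j - X₂ ω j)) |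
        MeasurableSpace.comap X₁ inferInstance]) :
    variance (fun ω => ∑ j, (A₁ j ω) ^ 2) P ≤
      variance (fun ω => ∑ j, Real.sign (X₁ ω j - X₂ ω j) * A₁ j ω) P ∧
    variance (fun ω => ∑ j, Real.sign (X₁ ω j - X₂ ω j) * A₁ j ω) P ≤
      variance (fun ω => ∑ j, Real.sign (X₁ ω j - X₂ ω j) * Real.sign (X₁ ω j - X₃ ω j)) P := by
  have hsign : ∀ j, Measurable fun q : (Fin p → ℝ) × (Fin p → ℝ) => Real.sign (q.1 j - q.2 j) :=
    fun j => by fun_prop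
  have hS : ∀ j, MemLp (fun ω => Real.sign (X₁ ω j - X₂ ω j)) ∞ P :=
    fun j => memLp_top_sign_comp (by fun_prop)
  have hT : ∀ j, MemLp (fun ω => Real.sign (X₁ ω j - X₃ ω j)) ∞ P :=
    fun j => memLp_top_sign_comp (by fun_prop)
  have hA_meas : ∀ j, AEStronglyMeasurable[MeasurableSpace.comap X₁ inferInstance] (A₁ j) P :=
    fun j => stronglyMeasurable_condExp.aestronglyMeasurable.congr (hA₁ j).symm
  have hA : ∀ j, MemLp (A₁ j) ∞ P := fun j => ((hS j).condExp le_top).ae_eq (hA₁ j).symm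
  have h₁₂ : IndepFun X₁ X₂ P := by simpa using hindep.indepFun (i := 0) (j := 1) (by decide)
  have h₁₂₃ : IndepFun (fun ω => (X₁ ω, X₂ ω)) X₃ P := by
    simpa using hindep.indepFun_prodMk (fun i => by fin_cases i <;> assumption) 0 1 2
      (by decide) (by decide)
  have hT_cond : ∀ j, P[fun ω => Real.sign (X₁ ω j - X₃ ω j) |
      MeasurableSpace.comap (fun ω => (X₁ ω, X₂ ω)) inferInstance] =ᵐ[P] A₁ j := fun j =>
    (condExp_comap_prodMk_ae_eq_condExp_comap hX₁ hX₂ hX₃ h₁₂ h₁₂₃ (hid₃.trans hid₂.symm)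
      (hsign j).stronglyMeasurable ((hS j).integrable le_top)).trans (hA₁ j).symm
  constructor
  · simpa only [sq, mul_comm (A₁ _ _)] using variance_sum_mul_le_of_condExp hX₁.comap_le
      Finset.univ hA_meas (fun j => ((hS j).mul (hA j)).mono_exponent le_top)
      (fun j => (hS j).integrable le_top) (fun j => (hA₁ j).symm)
  · exact variance_sum_mul_le_of_condExp (hX₁.prodMk hX₂).comap_le Finset.univ
      (fun j => ((hsign j).comp (comap_measurable _)).aestronglyMeasurable)
      (fun j => ((hT j).mul (hS j)).mono_exponent le_top)
      (fun j => (hT j).integrable le_top) hT_cond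

theorem hoeffding_variance_inequalities (p : ℕ)
    {Ω : Type*} [MeasurableSpace Ω] (P : Measure Ω) [IsProbabilityMeasure P]
    (X₁ X₂ X₃ : Ω → (Fin p → ℝ))
    (hX₁ : Measurable X₁) (hX₂ : Measurable X₂) (hX₃ : Measurable X₃)
    (hindep : iIndepFun ![X₁, X₂, X₃] P)
    (hid₂ : P.map X₂ = P.map X₁) (hid₃ : P.map X₃ = P.map X₁)
    (hac : ∀ j, P.map (fun ω => X₁ ω j) ≪ volume)
    (A₁ : Fin p → Ω → ℝ)
    (hA₁ : ∀ j, A₁ j =ᵐ[P] P[(fun ω => Real.sign (X₁ ω j - X₂ ω j)) |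
        MeasurableSpace.comap X₁ inferInstance]) :
    variance (fun ω => ∑ j, (A₁ j ω) ^ 2) P ≤
      variance (fun ω => ∑ j, Real.sign (X₁ ω j - X₂ ω j) * A₁ j ω) P ∧
    variance (fun ω => ∑ j, Real.sign (X₁ ω j - X₂ ω j) * A₁ j ω) P ≤
      variance (fun ω => ∑ j, Real.sign (X₁ ω j - X₂ ω j) * Real.sign (X₁ ω j - X₃ ω j)) P :=
  hoeffding_variance_inequalities_general p P X₁ X₂ X₃ hX₁ hX₂ hX₃ hindep hid₂ hid₃ A₁ hA₁
end

section
/- Let x₁,…,xₙ (vectors in ℝᵖ with all coordinates pairwise distinct within each feature) have sign vectors A_{ik} = sign(xᵢ − xₖ) entrywise, and ranks rᵢⱼ. Then the Spearman correlation matrix ρₙ = (1/n)RᵀR satisfies ρₙ = (3/(n(n²−1)))·∑*_{i,j} A_{ij}A_{ij}ᵀ + (3/(n(n²−1)))·∑*_{i,j,k} A_{ij}A_{ik}ᵀ, where ∑* denotes summation over mutually distinct indices. -/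
open Finset

theorem spearman_U_statistic_decomposition (n p : ℕ)
    (x : Fin n → Fin p → ℝ) (hx : ∀ j, Function.Injective (fun i => x i j))
    (A : Fin n → Fin n → Fin p → ℝ)
    (hA : ∀ i k j, A i k j = Real.sign (x i j - x k j))
    (r : Fin n → Fin p → ℕ)
    (hr : ∀ i j, r i j = (Finset.univ.filter (fun k => x k j ≤ x i j)).card)
    (R : Fin n → Fin p → ℝ)
    (hR : ∀ i j, R i j = Real.sqrt (12 / ((n : ℝ) ^ 2 - 1)) * ((r i j : ℝ) - (n + 1) / 2))
    (ρ : Matrix (Fin p) (Fin p) ℝ)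
    (hρ : ∀ a b, ρ a b = (1 / (n : ℝ)) * ∑ i, R i a * R i b) :
    ρ = (3 / ((n : ℝ) * ((n : ℝ) ^ 2 - 1))) •
          (∑ i, ∑ j ∈ Finset.univ.erase i, Matrix.vecMulVec (A i j) (A i j)) +
        (3 / ((n : ℝ) * ((n : ℝ) ^ 2 - 1))) •
          (∑ i, ∑ j ∈ Finset.univ.erase i, ∑ k ∈ (Finset.univ.erase i).erase j,
            Matrix.vecMulVec (A i j) (A i k)) := by
  have key : ∀ (i : Fin n) (j : Fin p),
      (r i j : ℝ) - ((n : ℝ) + 1) / 2 = (1/2) * ∑ k ∈ univ.erase i, A i k j := by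
    intro i j
    have hn1 : 1 ≤ n := i.pos
    set L := (univ.erase i).filter (fun k => x k j < x i j) with hL
    have hfilter : (univ.filter (fun k => x k j ≤ x i j)) = insert i L := by
      ext k
      simp only [hL, mem_filter, mem_univ, true_and, mem_insert, mem_erase]
      constructor
      · intro hk
        by_cases hki : k = i
        · exact Or.inl hki
        · exact Or.inr ⟨⟨hki, trivial⟩, lt_of_le_of_ne hk (fun h => hki (hx j h))⟩
      · rintro (rfl | ⟨_, hlt⟩)
        · exact le_refl _
        · exact le_of_lt hlt
    have hiL : i ∉ L := by simp [hL]
    have hrcard : r i j = L.card + 1 := by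
      rw [hr, hfilter, Finset.card_insert_of_notMem hiL]
    have hsum : ∑ k ∈ univ.erase i, A i k j
        = ∑ k ∈ univ.erase i, ((2:ℝ) * (if x k j < x i j then 1 else 0) - 1) := by
      refine Finset.sum_congr rfl fun k hk => ?_
      have hki : k ≠ i := (mem_erase.mp hk).1
      have hne : x k j ≠ x i j := fun h => hki (hx j h)
      rcases lt_or_gt_of_ne hne with h | h
      · rw [hA, Real.sign_of_pos (by linarith), if_pos h]; ring
      · rw [hA, Real.sign_of_neg (by linarith), if_neg (not_lt.mpr h.le)]; ring
    have hcard : ((univ.erase i).card : ℝ) = (n : ℝ) - 1 := by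
      rw [Finset.card_erase_of_mem (mem_univ i), Finset.card_univ, Fintype.card_fin]
      push_cast [hn1]
      ring
    rw [hsum, Finset.sum_sub_distrib, Finset.sum_const, ← Finset.mul_sum,
      Finset.sum_boole, hrcard]
    push_cast
    rw [nsmul_eq_mul]
    rw [show (((univ.erase i).card : ℝ)) = (n : ℝ) - 1 from hcard]
    simp only [hL]
    ring
  have hRR : ∀ (i : Fin n) (a b : Fin p),
      R i a * R i b = (3 / ((n:ℝ)^2 - 1)) *
        ((∑ k ∈ univ.erase i, A i k a) * (∑ k ∈ univ.erase i, A i k b)) := by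
    intro i a b
    have hn1 : 1 ≤ n := i.pos
    have hnonneg : (0:ℝ) ≤ 12 / ((n:ℝ)^2 - 1) := by
      rcases eq_or_lt_of_le hn1 with h | h
      · rw [← h]; norm_num
      · have h1 : (1:ℝ) < (n:ℝ) := by exact_mod_cast h
        have hd : (0:ℝ) < (n:ℝ)^2 - 1 := by nlinarith
        positivity
    have hs : Real.sqrt (12 / ((n:ℝ)^2 - 1)) * Real.sqrt (12 / ((n:ℝ)^2 - 1))
        = 12 / ((n:ℝ)^2 - 1) := Real.mul_self_sqrt hnonneg
    rw [hR, hR, key i a, key i b, mul_mul_mul_comm, hs]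
    ring
  have hsplit : ∀ (i : Fin n) (a b : Fin p),
      (∑ k ∈ univ.erase i, A i k a) * (∑ k ∈ univ.erase i, A i k b)
      = (∑ j ∈ univ.erase i, A i j a * A i j b)
        + ∑ j ∈ univ.erase i, ∑ k ∈ (univ.erase i).erase j, A i j a * A i k b := by
    intro i a b
    rw [Finset.sum_mul_sum, ← Finset.sum_add_distrib]
    refine Finset.sum_congr rfl fun jj hjj => ?_
    exact (Finset.add_sum_erase _ _ hjj).symm
  ext a b
  rw [hρ]
  simp only [Matrix.add_apply, Matrix.smul_apply, Matrix.sum_apply,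
    Matrix.vecMulVec_apply, smul_eq_mul]
  rw [Finset.sum_congr rfl (fun i _ => hRR i a b), ← Finset.mul_sum,
    Finset.sum_congr rfl (fun i (_ : i ∈ univ) => hsplit i a b),
    Finset.sum_add_distrib]
  rw [show (3:ℝ)/((n:ℝ)*((n:ℝ)^2-1)) = 1/(n:ℝ) * (3/((n:ℝ)^2-1)) from by
    rw [div_eq_mul_inv, mul_inv]; ring]
  ring
end

section
/- With ρₙ the Spearman correlation matrix, τₙ = (1/(n(n−1)))∑*_{i,j} A_{ij}A_{ij}ᵀ the Kendall correlation matrix, and ρ̃ₙ = (3/(n(n−1)(n−2)))∑*_{i,j,k} A_{ij}A_{ik}ᵀ, one has the identity ρₙ = (3/(n+1))·τₙ + ((n−2)/(n+1))·ρ̃ₙ. -/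
open Finset

theorem spearman_eq_kendall_plus_improved (n p : ℕ)
    (x : Fin n → Fin p → ℝ) (hx : ∀ j, Function.Injective (fun i => x i j))
    (A : Fin n → Fin n → Fin p → ℝ)
    (hA : ∀ i k j, A i k j = Real.sign (x i j - x k j))
    (r : Fin n → Fin p → ℕ)
    (hr : ∀ i j, r i j = (Finset.univ.filter (fun k => x k j ≤ x i j)).card)
    (R : Fin n → Fin p → ℝ)
    (hR : ∀ i j, R i j = Real.sqrt (12 / ((n : ℝ) ^ 2 - 1)) * ((r i j : ℝ) - (n + 1) / 2))
    (ρ τ ρ' : Matrix (Fin p) (Fin p) ℝ)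
    (hρ : ∀ a b, ρ a b = (1 / (n : ℝ)) * ∑ i, R i a * R i b)
    (hτ : τ = (1 / ((n : ℝ) * ((n : ℝ) - 1))) •
      (∑ i, ∑ j ∈ Finset.univ.erase i, Matrix.vecMulVec (A i j) (A i j)))
    (hρ' : ρ' = (3 / ((n : ℝ) * ((n : ℝ) - 1) * ((n : ℝ) - 2))) •
      (∑ i, ∑ j ∈ Finset.univ.erase i, ∑ k ∈ (Finset.univ.erase i).erase j,
        Matrix.vecMulVec (A i j) (A i k))) :
    ρ = (3 / ((n : ℝ) + 1)) • τ + (((n : ℝ) - 2) / ((n : ℝ) + 1)) • ρ' := by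
  classical
  rcases Nat.eq_zero_or_pos n with hn0 | hn1
  · subst hn0
    subst hτ; subst hρ'
    ext a b
    simp [hρ, Matrix.smul_apply, Matrix.add_apply]
  -- n ≥ 1 from here
  have hn1R : (1 : ℝ) ≤ (n : ℝ) := by exact_mod_cast hn1
  have hc2 : Real.sqrt (12 / ((n : ℝ) ^ 2 - 1)) ^ 2 = 12 / ((n : ℝ) ^ 2 - 1) :=
    Real.sq_sqrt (div_nonneg (by norm_num) (by nlinarith))
  -- key row-sum lemma
  have hsum : ∀ (i : Fin n) (a : Fin p),
      ∑ k, A i k a = 2 * (r i a : ℝ) - ((n : ℝ) + 1) := by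
    intro i a
    have hterm : ∀ k, A i k a =
        (if x k a < x i a then (1:ℝ) else 0) - (if x i a < x k a then (1:ℝ) else 0) := by
      intro k
      rw [hA]
      rcases lt_trichotomy (x k a) (x i a) with h | h | h
      · rw [Real.sign_of_pos (by linarith)]
        simp [h, not_lt.mpr h.le]
      · rw [h, sub_self, Real.sign_zero]
        simp [h]
      · rw [Real.sign_of_neg (by linarith)]
        simp [not_lt.mpr h.le, h]
    have hle : (Finset.univ.filter (fun k => x k a ≤ x i a)).card = r i a := (hr i a).symm
    have hiS : i ∈ Finset.univ.filter (fun k => x k a ≤ x i a) := by simp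
    have hlt : (Finset.univ.filter (fun k => x k a < x i a))
        = (Finset.univ.filter (fun k => x k a ≤ x i a)).erase i := by
      ext k
      simp only [Finset.mem_filter, Finset.mem_erase, Finset.mem_univ, true_and]
      constructor
      · intro h
        refine ⟨fun hk => ?_, h.le⟩
        subst hk; exact lt_irrefl _ h
      · rintro ⟨hk, h⟩
        rcases lt_or_eq_of_le h with h' | h'
        · exact h'
        · exact absurd (hx a h') hk
    have hgt : (Finset.univ.filter (fun k => x i a < x k a))
        = Finset.univ \ (Finset.univ.filter (fun k => x k a ≤ x i a)) := by
      ext k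
      simp [not_le]
    have h1r : 1 ≤ r i a := by
      rw [← hle]
      exact Finset.card_pos.mpr ⟨i, hiS⟩
    have hrn : r i a ≤ n := by
      rw [← hle]
      simpa using Finset.card_le_card (Finset.filter_subset (fun k => x k a ≤ x i a) Finset.univ)
    calc ∑ k, A i k a
        = ∑ k, ((if x k a < x i a then (1:ℝ) else 0) - (if x i a < x k a then (1:ℝ) else 0)) :=
          Finset.sum_congr rfl fun k _ => hterm k
      _ = ((Finset.univ.filter (fun k => x k a < x i a)).card : ℝ)
          - ((Finset.univ.filter (fun k => x i a < x k a)).card : ℝ) := by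
          rw [Finset.sum_sub_distrib]
          simp [Finset.sum_boole]
      _ = ((r i a - 1 : ℕ) : ℝ) - ((n - r i a : ℕ) : ℝ) := by
          rw [hlt, hgt, Finset.card_erase_of_mem hiS, Finset.card_sdiff_of_subset (Finset.filter_subset _ _),
            hle, Finset.card_univ, Fintype.card_fin]
      _ = 2 * (r i a : ℝ) - ((n : ℝ) + 1) := by
          rw [Nat.cast_sub h1r, Nat.cast_sub hrn]
          push_cast
          ring
  have hRA : ∀ (i : Fin n) (a : Fin p),
      R i a = (Real.sqrt (12 / ((n : ℝ) ^ 2 - 1)) / 2) * ∑ k, A i k a := by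
    intro i a
    rw [hR, hsum]
    ring
  have hAii : ∀ (i : Fin n) (a : Fin p), A i i a = 0 := by
    intro i a
    rw [hA, sub_self, Real.sign_zero]
  have hRow : ∀ (i : Fin n) (a : Fin p),
      ∑ j ∈ Finset.univ.erase i, A i j a = ∑ j, A i j a := fun i a =>
    Finset.sum_erase _ (hAii i a)
  have hprod : ∀ (i : Fin n) (a b : Fin p),
      (∑ j, A i j a) * (∑ k, A i k b)
      = (∑ j ∈ Finset.univ.erase i, A i j a * A i j b)
        + ∑ j ∈ Finset.univ.erase i, ∑ k ∈ (Finset.univ.erase i).erase j,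
            A i j a * A i k b := by
    intro i a b
    rw [← hRow i a, ← hRow i b, Finset.sum_mul, ← Finset.sum_add_distrib]
    refine Finset.sum_congr rfl fun j hj => ?_
    rw [Finset.mul_sum]
    exact (Finset.add_sum_erase _ _ hj).symm
  have hρab : ∀ a b, ρ a b = Real.sqrt (12 / ((n : ℝ) ^ 2 - 1)) ^ 2 / (4 * (n : ℝ)) *
      ((∑ i, ∑ j ∈ Finset.univ.erase i, A i j a * A i j b)
        + ∑ i, ∑ j ∈ Finset.univ.erase i, ∑ k ∈ (Finset.univ.erase i).erase j,
            A i j a * A i k b) := by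
    intro a b
    rw [hρ]
    have hterm : ∀ i : Fin n, R i a * R i b = Real.sqrt (12 / ((n : ℝ) ^ 2 - 1)) ^ 2 / 4 *
        ((∑ j ∈ Finset.univ.erase i, A i j a * A i j b)
          + ∑ j ∈ Finset.univ.erase i, ∑ k ∈ (Finset.univ.erase i).erase j,
              A i j a * A i k b) := by
      intro i
      rw [hRA i a, hRA i b, ← hprod i a b]
      ring
    rw [Finset.sum_congr rfl fun i _ => hterm i, ← Finset.mul_sum, Finset.sum_add_distrib]
    ring
  have hτab : ∀ a b, τ a b = 1 / ((n : ℝ) * ((n : ℝ) - 1)) *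
      ∑ i, ∑ j ∈ Finset.univ.erase i, A i j a * A i j b := by
    intro a b
    rw [hτ]
    simp [Matrix.smul_apply, Matrix.sum_apply, Matrix.vecMulVec_apply, smul_eq_mul]
  have hρ'ab : ∀ a b, ρ' a b = 3 / ((n : ℝ) * ((n : ℝ) - 1) * ((n : ℝ) - 2)) *
      ∑ i, ∑ j ∈ Finset.univ.erase i, ∑ k ∈ (Finset.univ.erase i).erase j,
        A i j a * A i k b := by
    intro a b
    rw [hρ']
    simp [Matrix.smul_apply, Matrix.sum_apply, Matrix.vecMulVec_apply, smul_eq_mul]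
  have key : ∀ t s : ℝ, (n = 1 → t = 0) → (n ≤ 2 → s = 0) →
      Real.sqrt (12 / ((n : ℝ) ^ 2 - 1)) ^ 2 / (4 * (n : ℝ)) * (t + s)
        = 3 / ((n : ℝ) + 1) * (1 / ((n : ℝ) * ((n : ℝ) - 1)) * t)
          + ((n : ℝ) - 2) / ((n : ℝ) + 1) *
            (3 / ((n : ℝ) * ((n : ℝ) - 1) * ((n : ℝ) - 2)) * s) := by
    intro t s ht0 hs0
    rw [hc2]
    rcases lt_or_ge n 3 with h3 | h3
    · have hn12 : n = 1 ∨ n = 2 := by omega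
      rcases hn12 with h | h
      · rw [ht0 h, hs0 (by omega), h]
        norm_num
      · rw [hs0 (by omega), h]
        norm_num
    · have hnR : (3 : ℝ) ≤ (n : ℝ) := by exact_mod_cast h3
      have h0 : (n : ℝ) ≠ 0 := by linarith
      have h1 : (n : ℝ) - 1 ≠ 0 := by linarith
      have h2 : (n : ℝ) - 2 ≠ 0 := by linarith
      have h4 : (n : ℝ) + 1 ≠ 0 := by linarith
      have h5 : (n : ℝ) ^ 2 - 1 ≠ 0 := by nlinarith
      field_simp
      ring
  ext a b
  rw [Matrix.add_apply, Matrix.smul_apply, Matrix.smul_apply, hρab, hτab, hρ'ab,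
    smul_eq_mul, smul_eq_mul]
  refine key _ _ (fun h1 => ?_) (fun h2 => ?_)
  · refine Finset.sum_eq_zero fun i _ => Finset.sum_eq_zero fun j hj => ?_
    have hji := (Finset.mem_erase.mp hj).1
    have hi := i.isLt
    have hjlt := j.isLt
    exact absurd (Fin.ext (by omega)) hji
  · refine Finset.sum_eq_zero fun i _ => Finset.sum_eq_zero fun j hj =>
      Finset.sum_eq_zero fun k hk => ?_
    have hji := (Finset.mem_erase.mp hj).1
    have hk' := Finset.mem_erase.mp hk
    have hkj := hk'.1
    have hki := (Finset.mem_erase.mp hk'.2).1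
    have e1 : j.val ≠ i.val := fun h => hji (Fin.ext h)
    have e2 : k.val ≠ j.val := fun h => hkj (Fin.ext h)
    have e3 : k.val ≠ i.val := fun h => hki (Fin.ext h)
    have hi := i.isLt
    have hjlt := j.isLt
    have hklt := k.isLt
    omega
end
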